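/- Let G be the Cartesian product graph ℕ □ ℕ with every edge of length 1. Then for every k ≥ 5, G is not (k, k/2)-path-chordal: for each n ≥ k, the geodesic square C_n through the vertices (1,1), (n,1), (n,n), (1,n) is a cycle with L(C_n) = 4n − 4 ≥ k all of whose shortcuts have length at least n − 1 > k/2. -/

import Mathlib

/-!
The boundary of the square `[1, m + 1]²` in `ℕ □ ℕ` is a cycle of length `4m`. Any walk in the
grid is at least as long as the `ℓ¹` distance of its endpoints. Two boundary vertices whose
coordinates both differ by less than `m` lie on one side or on two adjacent sides, so an arc of
the cycle joins them with length equal to their `ℓ¹` distance and no shortcut joins them. Hence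
a shortcut joins vertices some coordinate of which differs by at least `m = n - 1`, and
`n - 1 > k / 2` as soon as `n ≥ k ≥ 5`.
-/

open SimpleGraph

namespace Chordality

variable {V : Type*} {G : SimpleGraph V}

/-- The length of a walk in a graph whose edge `e` has length `ℓ e`. -/
noncomputable def wlen (ℓ : Sym2 V → ℝ) {u v : V} (w : G.Walk u v) : ℝ :=
  (w.edges.map ℓ).sum

/-- The path metric of a metric graph: the infimum of the lengths of walks joining
two vertices. -/
noncomputable def gdist (G : SimpleGraph V) (ℓ : Sym2 V → ℝ) (u v : V) : ℝ :=
  sInf {x : ℝ | ∃ w : G.Walk u v, wlen ℓ w = x}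

/-- A walk is geodesic if its length realizes the path metric between its endpoints. -/
def IsGeodesicWalk (ℓ : Sym2 V → ℝ) {u v : V} (w : G.Walk u v) : Prop :=
  wlen ℓ w = gdist G ℓ u v

/-- `G`, with edge lengths `ℓ`, is a metric graph: connected, locally finite,
with positive edge lengths. -/
def IsMetricGraph (G : SimpleGraph V) (ℓ : Sym2 V → ℝ) : Prop :=
  G.Connected ∧ (∀ e ∈ G.edgeSet, 0 < ℓ e) ∧ ∀ v : V, (G.neighborSet v).Finite

/-- A walk lies inside the closed walk `c`. -/
def WalkIn {z u v : V} (c : G.Walk z z) (w : G.Walk u v) : Prop :=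
  (∀ e ∈ w.edges, e ∈ c.edges) ∧ ∀ a ∈ w.support, a ∈ c.support

/-- The length metric `d_C` of a cycle `c`, evaluated on vertices of `c`:
the infimum of lengths of walks joining `u` and `v` inside `c`. -/
noncomputable def cdist (ℓ : Sym2 V → ℝ) {z : V} (c : G.Walk z z) (u v : V) : ℝ :=
  sInf {x : ℝ | ∃ w : G.Walk u v, WalkIn c w ∧ wlen ℓ w = x}

/-- `σ` is a shortcut of the cycle `c`: a path joining two vertices `p, q` of `c`
with `L(σ) < d_C(p, q)`. -/
def IsShortcut (ℓ : Sym2 V → ℝ) {z p q : V} (c : G.Walk z z) (σ : G.Walk p q) : Prop :=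
  σ.IsPath ∧ p ∈ c.support ∧ q ∈ c.support ∧ wlen ℓ σ < cdist ℓ c p q

/-- `σ` is a strict shortcut of `c`: a shortcut meeting `c` only at its endpoints. -/
def IsStrictShortcut (ℓ : Sym2 V → ℝ) {z p q : V} (c : G.Walk z z) (σ : G.Walk p q) : Prop :=
  IsShortcut ℓ c σ ∧ ∀ a ∈ σ.support, a ∈ c.support → a = p ∨ a = q

/-- `v` is a shortcut vertex of `c`, i.e. an endpoint of some strict shortcut of `c`. -/
def ShortcutVertex (ℓ : Sym2 V → ℝ) {z : V} (c : G.Walk z z) (v : V) : Prop :=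
  ∃ (p q : V) (σ : G.Walk p q), IsStrictShortcut ℓ c σ ∧ (v = p ∨ v = q)

/-- `v` is a shortcut vertex of `c` associated to a strict shortcut of length at most `m`. -/
def ShortcutVertexLe (ℓ : Sym2 V → ℝ) {z : V} (c : G.Walk z z) (m : ℝ) (v : V) : Prop :=
  ∃ (p q : V) (σ : G.Walk p q),
    IsStrictShortcut ℓ c σ ∧ wlen ℓ σ ≤ m ∧ (v = p ∨ v = q)

/-- `(k,m)`-edge-chordal: every cycle of length at least `k` has a shortcut consisting of
a single edge of length at most `m`. -/
def EdgeChordal (G : SimpleGraph V) (ℓ : Sym2 V → ℝ) (k m : ℝ) : Prop :=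
  ∀ (z : V) (c : G.Walk z z), c.IsCycle → k ≤ wlen ℓ c →
    ∃ (p q : V) (h : G.Adj p q),
      IsShortcut ℓ c (Walk.cons h Walk.nil) ∧ ℓ s(p, q) ≤ m

/-- `k`-path-chordal: every cycle of length at least `k` admits a shortcut. -/
def PathChordal (G : SimpleGraph V) (ℓ : Sym2 V → ℝ) (k : ℝ) : Prop :=
  ∀ (z : V) (c : G.Walk z z), c.IsCycle → k ≤ wlen ℓ c →
    ∃ (p q : V) (σ : G.Walk p q), IsShortcut ℓ c σ

/-- `(k,m)`-path-chordal: every cycle of length at least `k` admits a shortcut of length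
at most `m`. -/
def PathChordalLe (G : SimpleGraph V) (ℓ : Sym2 V → ℝ) (k m : ℝ) : Prop :=
  ∀ (z : V) (c : G.Walk z z), c.IsCycle → k ≤ wlen ℓ c →
    ∃ (p q : V) (σ : G.Walk p q), IsShortcut ℓ c σ ∧ wlen ℓ σ ≤ m

/-- `ε`-densely `(k,m)`-path-chordal: on every cycle of length at least `k`, the vertices
that are shortcut vertices of strict shortcuts of length at most `m` form an `ε`-dense
subset of `(C, d_C)`. -/
def DenselyPathChordal (G : SimpleGraph V) (ℓ : Sym2 V → ℝ) (ε k m : ℝ) : Prop :=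
  ∀ (z : V) (c : G.Walk z z), c.IsCycle → k ≤ wlen ℓ c →
    ∀ x ∈ c.support, ∃ v, ShortcutVertexLe ℓ c m v ∧ cdist ℓ c v x < ε

/-- `ε`-densely `k`-path-chordal: on every cycle of length at least `k`, the shortcut
vertices (of strict shortcuts, with no bound on their lengths) form an `ε`-dense subset
of `(C, d_C)`. -/
def DenselyKPathChordal (G : SimpleGraph V) (ℓ : Sym2 V → ℝ) (ε k : ℝ) : Prop :=
  ∀ (z : V) (c : G.Walk z z), c.IsCycle → k ≤ wlen ℓ c →
    ∀ x ∈ c.support, ∃ v, ShortcutVertex ℓ c v ∧ cdist ℓ c v x < ε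

/-- The geodesic triangle with sides `g1, g2, g3` is `δ`-thin: each side is contained in
the `δ`-neighborhood of the union of the other two sides. -/
def ThinTriangle (ℓ : Sym2 V → ℝ) (δ : ℝ) {x y z : V}
    (g1 : G.Walk x y) (g2 : G.Walk y z) (g3 : G.Walk z x) : Prop :=
  (∀ p ∈ g1.support, ∃ q, (q ∈ g2.support ∨ q ∈ g3.support) ∧ gdist G ℓ p q ≤ δ) ∧
  (∀ p ∈ g2.support, ∃ q, (q ∈ g3.support ∨ q ∈ g1.support) ∧ gdist G ℓ p q ≤ δ) ∧
  (∀ p ∈ g3.support, ∃ q, (q ∈ g1.support ∨ q ∈ g2.support) ∧ gdist G ℓ p q ≤ δ)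

/-- `G` is `δ`-hyperbolic: every geodesic triangle is `δ`-thin. -/
def Hyperbolic (G : SimpleGraph V) (ℓ : Sym2 V → ℝ) (δ : ℝ) : Prop :=
  ∀ (x y z : V) (g1 : G.Walk x y) (g2 : G.Walk y z) (g3 : G.Walk z x),
    IsGeodesicWalk ℓ g1 → IsGeodesicWalk ℓ g2 → IsGeodesicWalk ℓ g3 →
    ThinTriangle ℓ δ g1 g2 g3

/-- The sharp hyperbolicity constant `δ(G)`. -/
noncomputable def hypConst (G : SimpleGraph V) (ℓ : Sym2 V → ℝ) : ℝ :=
  sInf {δ : ℝ | 0 ≤ δ ∧ Hyperbolic G ℓ δ}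

/-- A walk lies inside the geodesic triangle with sides `g1, g2, g3`. -/
def WalkInTri {x y z u v : V} (g1 : G.Walk x y) (g2 : G.Walk y z) (g3 : G.Walk z x)
    (w : G.Walk u v) : Prop :=
  (∀ e ∈ w.edges, e ∈ g1.edges ∨ e ∈ g2.edges ∨ e ∈ g3.edges) ∧
  ∀ a ∈ w.support, a ∈ g1.support ∨ a ∈ g2.support ∨ a ∈ g3.support

/-- The length metric `d_T` of the geodesic triangle with sides `g1, g2, g3`,
evaluated on vertices of the triangle. -/
noncomputable def tdist (ℓ : Sym2 V → ℝ) {x y z : V} (g1 : G.Walk x y) (g2 : G.Walk y z)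
    (g3 : G.Walk z x) (u v : V) : ℝ :=
  sInf {r : ℝ | ∃ w : G.Walk u v, WalkInTri g1 g2 g3 w ∧ wlen ℓ w = r}

/-- `σ` is a shortcut of the geodesic triangle with sides `g1, g2, g3`: a path joining
two vertices `p, q` of the triangle with `L(σ) < d_T(p, q)`. -/
def IsTriShortcut (ℓ : Sym2 V → ℝ) {x y z p q : V} (g1 : G.Walk x y) (g2 : G.Walk y z)
    (g3 : G.Walk z x) (σ : G.Walk p q) : Prop :=
  σ.IsPath ∧ (p ∈ g1.support ∨ p ∈ g2.support ∨ p ∈ g3.support) ∧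
    (q ∈ g1.support ∨ q ∈ g2.support ∨ q ∈ g3.support) ∧
    wlen ℓ σ < tdist ℓ g1 g2 g3 p q

/-- `v` is a shortcut vertex of the triangle, associated to a shortcut of length
at most `m`. -/
def TriShortcutVertexLe (ℓ : Sym2 V → ℝ) {x y z : V} (g1 : G.Walk x y) (g2 : G.Walk y z)
    (g3 : G.Walk z x) (m : ℝ) (v : V) : Prop :=
  ∃ (p q : V) (σ : G.Walk p q),
    IsTriShortcut ℓ g1 g2 g3 σ ∧ wlen ℓ σ ≤ m ∧ (v = p ∨ v = q)

/-- `ε`-densely `(k,m)`-path-chordal on the triangles: for every geodesic triangle of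
total length at least `k`, the shortcut vertices of shortcuts of length at most `m`
form an `ε`-dense subset of `(T, d_T)`. -/
def DenselyPathChordalOnTriangles (G : SimpleGraph V) (ℓ : Sym2 V → ℝ) (ε k m : ℝ) : Prop :=
  ∀ (x y z : V) (g1 : G.Walk x y) (g2 : G.Walk y z) (g3 : G.Walk z x),
    IsGeodesicWalk ℓ g1 → IsGeodesicWalk ℓ g2 → IsGeodesicWalk ℓ g3 →
    k ≤ wlen ℓ g1 + wlen ℓ g2 + wlen ℓ g3 →
    ∀ p, (p ∈ g1.support ∨ p ∈ g2.support ∨ p ∈ g3.support) →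
      ∃ v, TriShortcutVertexLe ℓ g1 g2 g3 m v ∧ tdist ℓ g1 g2 g3 v p < ε

end Chordality

namespace Chordality

/-- The graph `ℕ`, where `n` and `n + 1` are adjacent. -/
def nline : SimpleGraph ℕ := SimpleGraph.fromRel fun a b => b = a + 1

/-- The Cartesian product graph `ℕ □ ℕ`. -/
def GNN : SimpleGraph (ℕ × ℕ) := nline.boxProd nline

section Walks

variable {V : Type*} {G : SimpleGraph V}

lemma wlen_one {u v : V} (w : G.Walk u v) : wlen (fun _ => (1 : ℝ)) w = w.length := by
  simp [wlen]

lemma wlen_nonneg {ℓ : Sym2 V → ℝ} (hℓ : ∀ e, 0 ≤ ℓ e) {u v : V} (w : G.Walk u v) :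
    0 ≤ wlen ℓ w :=
  List.sum_nonneg fun _ he => by
    obtain ⟨e, -, rfl⟩ := List.mem_map.1 he
    exact hℓ e

lemma WalkIn.append {z u v x : V} {c : G.Walk z z} {w₁ : G.Walk u v} {w₂ : G.Walk v x}
    (h₁ : WalkIn c w₁) (h₂ : WalkIn c w₂) : WalkIn c (w₁.append w₂) := by
  refine ⟨fun e he => ?_, fun a ha => ?_⟩
  · rcases List.mem_append.1 (Walk.edges_append w₁ w₂ ▸ he) with he | he
    exacts [h₁.1 e he, h₂.1 e he]
  · rcases (Walk.mem_support_append_iff w₁ w₂).1 ha with ha | ha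
    exacts [h₁.2 a ha, h₂.2 a ha]

lemma WalkIn.reverse {z u v : V} {c : G.Walk z z} {w : G.Walk u v} (h : WalkIn c w) :
    WalkIn c w.reverse := by
  simpa [WalkIn] using h

@[simp]
lemma walkIn_copy {z u v u' v' : V} {c : G.Walk z z} {w : G.Walk u v} (hu : u = u')
    (hv : v = v') : WalkIn c (w.copy hu hv) ↔ WalkIn c w := by
  simp [WalkIn]

lemma IsShortcut.wlen_lt_of_walkIn {ℓ : Sym2 V → ℝ} (hℓ : ∀ e, 0 ≤ ℓ e) {z p q : V}
    {c : G.Walk z z} {σ w : G.Walk p q} (hσ : IsShortcut ℓ c σ) (hw : WalkIn c w) :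
    wlen ℓ σ < wlen ℓ w :=
  hσ.2.2.2.trans_le <| csInf_le ⟨0, by rintro _ ⟨w', -, rfl⟩; exact wlen_nonneg hℓ w'⟩ ⟨w, hw, rfl⟩

def walkOfFun (f : ℕ → V) : (n : ℕ) → (∀ i < n, G.Adj (f i) (f (i + 1))) → G.Walk (f 0) (f n)
  | 0, _ => .nil
  | n + 1, hf => (walkOfFun f n fun i hi => hf i (by omega)).concat (hf n (by omega))

variable {f : ℕ → V} {n : ℕ} {hf : ∀ i < n, G.Adj (f i) (f (i + 1))}

@[simp]
lemma length_walkOfFun : (walkOfFun f n hf).length = n := by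
  induction n with
  | zero => rfl
  | succ n ih => simp [walkOfFun, ih]

lemma support_walkOfFun : (walkOfFun f n hf).support = (List.range (n + 1)).map f := by
  induction n with
  | zero => rfl
  | succ n ih => rw [walkOfFun, Walk.support_concat, ih, List.range_succ (n := n + 1)]; simp

lemma edges_walkOfFun :
    (walkOfFun f n hf).edges = (List.range n).map fun i => s(f i, f (i + 1)) := by
  induction n with
  | zero => rfl
  | succ n ih => rw [walkOfFun, Walk.edges_concat, ih, List.range_succ]; simp

lemma mem_support_walkOfFun {v : V} : v ∈ (walkOfFun f n hf).support ↔ ∃ i ≤ n, f i = v := by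
  simp [support_walkOfFun]

variable {z : V} (h₀ : f 0 = z) (hₙ : f n = z)
include h₀ hₙ

lemma isCycle_copy_walkOfFun (h₃ : 3 ≤ n) (hinj : Set.InjOn f (Set.Icc 1 n)) :
    ((walkOfFun f n hf).copy h₀ hₙ).IsCycle := by
  refine Walk.isCycle_iff_isPath_tail_and_le_length.2 ⟨?_, by simpa using h₃⟩
  have hne : ¬((walkOfFun f n hf).copy h₀ hₙ).Nil := by
    rw [← Walk.length_eq_zero_iff, Walk.length_copy, length_walkOfFun]; omega
  rw [Walk.isPath_def, Walk.support_tail_of_not_nil _ hne, Walk.support_copy, support_walkOfFun,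
    List.range_succ_eq_map, List.map_cons, List.tail_cons, List.map_map]
  refine List.Nodup.map_on (fun i hi j hj hij => ?_) List.nodup_range
  simp only [List.mem_range] at hi hj
  exact Nat.succ_injective (hinj ⟨by simp, hi⟩ ⟨by simp, hj⟩ hij)

lemma exists_walkIn_length_eq_of_le {a b : ℕ} (hab : a ≤ b) (hb : b ≤ n) :
    ∃ w : G.Walk (f a) (f b), WalkIn ((walkOfFun f n hf).copy h₀ hₙ) w ∧ w.length = b - a := by
  obtain ⟨d, rfl⟩ := Nat.exists_eq_add_of_le hab
  refine ⟨(walkOfFun (fun k => f (a + k)) d fun k hk => hf (a + k) (by omega)).copy rfl rfl,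
    ⟨?_, ?_⟩, by simp⟩
  · simp only [Walk.edges_copy, edges_walkOfFun, List.mem_map, List.mem_range]
    rintro _ ⟨k, hk, rfl⟩
    exact ⟨a + k, by omega, rfl⟩
  · simp only [Walk.support_copy, mem_support_walkOfFun]
    rintro _ ⟨k, hk, rfl⟩
    exact ⟨a + k, by omega, rfl⟩

lemma exists_walkIn_length_eq_dist {a b : ℕ} (ha : a ≤ n) (hb : b ≤ n) :
    ∃ w : G.Walk (f a) (f b), WalkIn ((walkOfFun f n hf).copy h₀ hₙ) w ∧
      w.length = a.dist b := by
  wlog hab : a ≤ b generalizing a b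
  · obtain ⟨w, hw, hl⟩ := this hb ha (by omega)
    exact ⟨w.reverse, hw.reverse, by rw [Walk.length_reverse, hl, Nat.dist_comm]⟩
  obtain ⟨w, hw, hl⟩ := exists_walkIn_length_eq_of_le h₀ hₙ hab hb
  exact ⟨w, hw, by rw [hl, Nat.dist_eq_sub_of_le hab]⟩

lemma exists_walkIn_length_eq_sub_dist {a b : ℕ} (ha : a ≤ n) (hb : b ≤ n) :
    ∃ w : G.Walk (f a) (f b), WalkIn ((walkOfFun f n hf).copy h₀ hₙ) w ∧
      w.length = n - a.dist b := by
  wlog hab : a ≤ b generalizing a b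
  · obtain ⟨w, hw, hl⟩ := this hb ha (by omega)
    exact ⟨w.reverse, hw.reverse, by rw [Walk.length_reverse, hl, Nat.dist_comm]⟩
  obtain ⟨w₁, hw₁, hl₁⟩ := exists_walkIn_length_eq_of_le h₀ hₙ (Nat.zero_le a) ha
  obtain ⟨w₂, hw₂, hl₂⟩ := exists_walkIn_length_eq_of_le h₀ hₙ hb le_rfl
  refine ⟨w₁.reverse.append (w₂.reverse.copy (hₙ.trans h₀.symm) rfl),
    hw₁.reverse.append ((walkIn_copy _ _).2 hw₂.reverse), ?_⟩
  simp only [Walk.length_append, Walk.length_reverse, Walk.length_copy, hl₁, hl₂,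
    Nat.dist_eq_sub_of_le hab]
  omega

end Walks

lemma gnn_adj_iff {p q : ℕ × ℕ} : GNN.Adj p q ↔
    p.1 = q.1 ∧ (q.2 = p.2 + 1 ∨ p.2 = q.2 + 1) ∨ p.2 = q.2 ∧ (q.1 = p.1 + 1 ∨ p.1 = q.1 + 1) := by
  simp only [GNN, nline, SimpleGraph.boxProd_adj, SimpleGraph.fromRel_adj]
  omega

def gridDist (p q : ℕ × ℕ) : ℕ := p.1.dist q.1 + p.2.dist q.2

lemma gridDist_le_length {p q : ℕ × ℕ} (w : GNN.Walk p q) : gridDist p q ≤ w.length := by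
  induction w with
  | nil => simp [gridDist]
  | cons h w ih =>
    rw [gnn_adj_iff] at h
    simp only [gridDist, Nat.dist, Walk.length_cons] at ih ⊢
    omega

/-- The vertex at arc length `i` along the boundary of `[1, m + 1]²`, traversed
counterclockwise from `(1, 1)`. -/
def squareVert (m i : ℕ) : ℕ × ℕ :=
  if i ≤ m then (i + 1, 1)
  else if i ≤ 2 * m then (m + 1, i - m + 1)
  else if i ≤ 3 * m then (3 * m - i + 1, m + 1)
  else (1, 4 * m - i + 1)

lemma squareVert_zero (m : ℕ) : squareVert m 0 = (1, 1) := by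
  simp [squareVert]

lemma squareVert_four_mul (m : ℕ) : squareVert m (4 * m) = (1, 1) := by
  unfold squareVert; split_ifs <;> simp <;> omega

lemma squareVert_adj {m i : ℕ} (hm : 0 < m) (hi : i < 4 * m) :
    GNN.Adj (squareVert m i) (squareVert m (i + 1)) := by
  rw [gnn_adj_iff]; unfold squareVert; split_ifs <;> omega

lemma squareVert_injOn {m : ℕ} (hm : 0 < m) : Set.InjOn (squareVert m) (Set.Icc 1 (4 * m)) := by
  rintro i ⟨hi₁, hi₂⟩ j ⟨hj₁, hj₂⟩ h
  unfold squareVert at h; split_ifs at h <;> simp only [Prod.mk.injEq] at h <;> omega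

lemma squareVert_mem_boundary (m i : ℕ) :
    let v := squareVert m i
    (v.1 = 1 ∨ v.1 = m + 1 ∨ v.2 = 1 ∨ v.2 = m + 1) ∧
      1 ≤ v.1 ∧ v.1 ≤ m + 1 ∧ 1 ≤ v.2 ∧ v.2 ≤ m + 1 := by
  unfold squareVert; split_ifs <;> omega

lemma squareVert_arc_le_or {m i j : ℕ} (hi : i ≤ 4 * m) (hj : j ≤ 4 * m) :
    let d := gridDist (squareVert m i) (squareVert m j)
    i.dist j ≤ d ∨ 4 * m - i.dist j ≤ d ∨ m ≤ d := by
  unfold gridDist squareVert Nat.dist; split_ifs <;> omega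

def gridSquare (m : ℕ) (hm : 0 < m) : GNN.Walk (1, 1) (1, 1) :=
  (walkOfFun (squareVert m) (4 * m) fun _ hi => squareVert_adj hm hi).copy
    (squareVert_zero m) (squareVert_four_mul m)

lemma isCycle_gridSquare {m : ℕ} (hm : 0 < m) : (gridSquare m hm).IsCycle :=
  isCycle_copy_walkOfFun _ _ (by omega) (squareVert_injOn hm)

lemma length_gridSquare {m : ℕ} (hm : 0 < m) : (gridSquare m hm).length = 4 * m := by
  simp [gridSquare]

lemma mem_support_gridSquare {m : ℕ} (hm : 0 < m) {v : ℕ × ℕ} :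
    v ∈ (gridSquare m hm).support ↔ ∃ i ≤ 4 * m, squareVert m i = v := by
  rw [gridSquare, Walk.support_copy, mem_support_walkOfFun]

lemma corners_mem_support_gridSquare {m : ℕ} (hm : 0 < m) :
    (m + 1, 1) ∈ (gridSquare m hm).support ∧ (m + 1, m + 1) ∈ (gridSquare m hm).support ∧
      (1, m + 1) ∈ (gridSquare m hm).support := by
  simp only [mem_support_gridSquare]
  refine ⟨⟨m, by omega, ?_⟩, ⟨2 * m, by omega, ?_⟩, ⟨3 * m, by omega, ?_⟩⟩ <;>
    unfold squareVert <;> split_ifs <;> simp only [Prod.mk.injEq, true_and, and_true] <;> omega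

lemma le_length_of_isShortcut_gridSquare {m : ℕ} (hm : 0 < m) {p q : ℕ × ℕ}
    {σ : GNN.Walk p q} (hσ : IsShortcut (fun _ => (1 : ℝ)) (gridSquare m hm) σ) :
    m ≤ σ.length := by
  obtain ⟨i, hi, rfl⟩ := (mem_support_gridSquare hm).1 hσ.2.1
  obtain ⟨j, hj, rfl⟩ := (mem_support_gridSquare hm).1 hσ.2.2.1
  have hσd := gridDist_le_length σ
  have shorter {w : GNN.Walk (squareVert m i) (squareVert m j)}
      (hw : WalkIn (gridSquare m hm) w) : σ.length < w.length := by
    exact_mod_cast wlen_one σ ▸ wlen_one w ▸ hσ.wlen_lt_of_walkIn (fun _ => zero_le_one) hw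
  have h₀ := squareVert_zero m
  have hₙ := squareVert_four_mul m
  rcases squareVert_arc_le_or hi hj with h | h | h
  · obtain ⟨w, hw, hl⟩ := exists_walkIn_length_eq_dist h₀ hₙ hi hj
    have := shorter hw
    omega
  · obtain ⟨w, hw, hl⟩ := exists_walkIn_length_eq_sub_dist h₀ hₙ hi hj
    have := shorter hw
    omega
  · omega

/-- The Cartesian product graph `G = ℕ □ ℕ` with all edges of length
`1` is not `(k, k/2)`-path-chordal for any `k ≥ 5`: for each `n ≥ k` the geodesic square
`C_n` through `(1,1), (n,1), (n,n), (1,n)` is a cycle of length `4n - 4 ≥ k` all of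
whose shortcuts have length at least `n - 1 > k/2`. -/
theorem natGrid_not_pathChordal (k : ℝ) (hk : 5 ≤ k) :
    ¬ PathChordalLe GNN (fun _ => (1 : ℝ)) k (k / 2) ∧
    ∀ n : ℕ, k ≤ (n : ℝ) →
      ∃ c : GNN.Walk (1, 1) (1, 1), c.IsCycle ∧
        wlen (fun _ => (1 : ℝ)) c = 4 * (n : ℝ) - 4 ∧ k ≤ wlen (fun _ => (1 : ℝ)) c ∧
        (n, 1) ∈ c.support ∧ (n, n) ∈ c.support ∧ (1, n) ∈ c.support ∧
        (∀ v ∈ c.support, (v.1 = 1 ∨ v.1 = n ∨ v.2 = 1 ∨ v.2 = n) ∧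
          1 ≤ v.1 ∧ v.1 ≤ n ∧ 1 ≤ v.2 ∧ v.2 ≤ n) ∧
        k / 2 < (n : ℝ) - 1 ∧
        ∀ (p q : ℕ × ℕ) (σ : GNN.Walk p q), IsShortcut (fun _ => (1 : ℝ)) c σ →
          (n : ℝ) - 1 ≤ wlen (fun _ => (1 : ℝ)) σ := by
  have side {n : ℕ} (hn : k ≤ n) : ∃ m : ℕ, n = m + 1 ∧ 0 < m ∧ k ≤ 4 * (m : ℝ) ∧ k / 2 < m := by
    have h5 : 5 ≤ n := by exact_mod_cast hk.trans hn
    refine ⟨n - 1, by omega, by omega, ?_, ?_⟩ <;> push_cast [Nat.one_le_of_lt h5] <;> linarith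
  have hwlen {m : ℕ} (hm : 0 < m) : wlen (fun _ => (1 : ℝ)) (gridSquare m hm) = 4 * (m : ℝ) := by
    rw [wlen_one, length_gridSquare]; push_cast; ring
  have long {m : ℕ} (hm : 0 < m) {p q : ℕ × ℕ} {σ : GNN.Walk p q}
      (hσ : IsShortcut (fun _ => (1 : ℝ)) (gridSquare m hm) σ) :
      (m : ℝ) ≤ wlen (fun _ => (1 : ℝ)) σ := by
    rw [wlen_one]; exact_mod_cast le_length_of_isShortcut_gridSquare hm hσ
  refine ⟨fun hPC => ?_, fun n hn => ?_⟩
  · obtain ⟨m, -, hm, hk4, hk2⟩ := side (Nat.le_ceil k)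
    obtain ⟨p, q, σ, hσ, hσk⟩ := hPC _ _ (isCycle_gridSquare hm) (hwlen hm ▸ hk4)
    linarith [long hm hσ]
  · obtain ⟨m, rfl, hm, hk4, hk2⟩ := side hn
    obtain ⟨hc₁, hc₂, hc₃⟩ := corners_mem_support_gridSquare hm
    push_cast
    refine ⟨gridSquare m hm, isCycle_gridSquare hm, by rw [hwlen hm]; ring, hwlen hm ▸ hk4,
      hc₁, hc₂, hc₃, fun v hv => ?_, by linarith,
      fun p q σ hσ => by linarith [long hm hσ]⟩
    obtain ⟨i, -, rfl⟩ := (mem_support_gridSquare hm).1 hv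
    exact squareVert_mem_boundary m i

end Chordality
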